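/- For k = ℓ = 2 tensors on a 3-dimensional inner product space, the projection onto trace-free tensors is given by B f = f − λ A f, where A f = (1/a₁) μf − (b₁/(a₁a₂)) λ μ² f with a₁ = 5/4, a₂ = 2·(4)/4 = 2 (more precisely a_K = K(k+ℓ+2−K)/(kℓ) and b_K = (k−K)(ℓ−K)/(kℓ) with k=ℓ=2), and B f lies in the kernel of μ while f − B f lies in the image of λ. -/

import Mathlib

open Matrix BigOperators

noncomputable section

/-- Tensors on the 3-dimensional space with `k` indices in the first (symmetric) group and
`l` indices in the second (symmetric) group. -/
abbrev Tensor (k l : ℕ) := (Fin k → Fin 3) → (Fin l → Fin 3) → ℝ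

/-- Symmetrization over the first group of indices. -/
def symFst {k l : ℕ} (f : Tensor k l) : Tensor k l :=
  fun I J => (1 / (Nat.factorial k : ℝ)) * ∑ σ : Equiv.Perm (Fin k), f (I ∘ σ) J

/-- Symmetrization over the second group of indices. -/
def symSnd {k l : ℕ} (f : Tensor k l) : Tensor k l :=
  fun I J => (1 / (Nat.factorial l : ℝ)) * ∑ τ : Equiv.Perm (Fin l), f I (J ∘ τ)

/-- `f` is symmetric in its first group of indices and in its second group of indices. -/
def IsSym {k l : ℕ} (f : Tensor k l) : Prop :=
  ∀ (I : Fin k → Fin 3) (J : Fin l → Fin 3) (σ : Equiv.Perm (Fin k)) (τ : Equiv.Perm (Fin l)),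
    f (I ∘ σ) (J ∘ τ) = f I J

/-- The symmetrized tensor product with the metric `g`:
`(λ w)_{i₁…i_k j₁…j_ℓ} = Sym(i₁…i_k) Sym(j₁…j_ℓ) (g_{i_k j_ℓ} w_{i₁…i_{k-1} j₁…j_{ℓ-1}})`. -/
def lamOp (g : Matrix (Fin 3) (Fin 3) ℝ) {k l : ℕ} (w : Tensor k l) : Tensor (k + 1) (l + 1) :=
  symFst (symSnd (fun I J =>
    g (I (Fin.last k)) (J (Fin.last l)) * w (I ∘ Fin.castSucc) (J ∘ Fin.castSucc)))

/-- The trace operator `(μ u)_{i₁…i_{k-1} j₁…j_{ℓ-1}} = u_{i₁…i_k j₁…j_ℓ} g^{i_k j_ℓ}`,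
contracting the last index of each group with the inverse metric `ginv`. -/
def muOp (ginv : Matrix (Fin 3) (Fin 3) ℝ) {k l : ℕ} (u : Tensor (k + 1) (l + 1)) : Tensor k l :=
  fun I J => ∑ a : Fin 3, ∑ b : Fin 3, ginv a b * u (Fin.snoc I a) (Fin.snoc J b)


/-! Contracting `λ` with `μ` gives `μ λ c = 3 c` on scalars (the trace of `g⁻¹ g`) and
`μ λ w = a₁ w + b₁ λ μ w` on `(1,1)`-tensors. Applying the first to `μ A f` and the second to
`λ A f` expresses `μ (f - λ A f)` as a combination of `μ f` and `λ μ² f` whose coefficients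
vanish for the given `a₁, a₂, b₁`. The second conjunct holds with `w = A f`. -/

open Finset

section Contraction

variable {n : Type*} [Fintype n] [DecidableEq n] {g : Matrix n n ℝ}

lemma sum_sum_inv_mul_mul_left (hg : g.IsSymm) (hdet : IsUnit g.det) (v : n → ℝ) (i : n) :
    ∑ a, ∑ b, g⁻¹ a b * g i b * v a = v i := by
  calc ∑ a, ∑ b, g⁻¹ a b * g i b * v a = ∑ a, (g * g⁻¹) i a * v a := by
        simp only [Matrix.mul_apply, sum_mul]
        refine sum_congr rfl fun a _ => sum_congr rfl fun b _ => ?_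
        rw [hg.inv.apply a b]; ring
    _ = v i := by simp [Matrix.mul_nonsing_inv g hdet, Matrix.one_apply]

lemma sum_sum_inv_mul_mul_right (hg : g.IsSymm) (hdet : IsUnit g.det) (v : n → ℝ) (j : n) :
    ∑ a, ∑ b, g⁻¹ a b * g a j * v b = v j := by
  rw [sum_comm, ← sum_sum_inv_mul_mul_left hg hdet v j]
  refine sum_congr rfl fun b _ => sum_congr rfl fun a _ => ?_
  rw [hg.inv.apply, hg.apply]

lemma sum_sum_inv_mul_self (hg : g.IsSymm) (hdet : IsUnit g.det) :
    ∑ a, ∑ b, g⁻¹ a b * g a b = Fintype.card n := by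
  have h := congrArg Matrix.trace (Matrix.mul_nonsing_inv g hdet)
  rw [Matrix.trace_one, Matrix.trace] at h
  rw [← h]
  refine sum_congr rfl fun a _ => ?_
  simp only [Matrix.diag, Matrix.mul_apply]
  refine sum_congr rfl fun b _ => ?_
  rw [hg.inv.apply a b]; ring

end Contraction

lemma sum_perm_fin_one {M : Type*} [AddCommMonoid M] (F : Equiv.Perm (Fin 1) → M) :
    ∑ σ, F σ = F 1 := by
  rw [show (univ : Finset (Equiv.Perm (Fin 1))) = {1} by decide, sum_singleton]

lemma sum_perm_fin_two {M : Type*} [AddCommMonoid M] (F : Equiv.Perm (Fin 2) → M) :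
    ∑ σ, F σ = F 1 + F (Equiv.swap 0 1) := by
  rw [show (univ : Finset (Equiv.Perm (Fin 2))) = {1, Equiv.swap 0 1} by decide,
    sum_insert (by decide), sum_singleton]

lemma fin_one_fun_eq_const {α : Type*} (I : Fin 1 → α) : I = fun _ => I 0 := by
  funext x; rw [Subsingleton.elim x 0]

lemma lamOp_zero_zero_apply (g : Matrix (Fin 3) (Fin 3) ℝ) (c : Tensor 0 0) (I J : Fin 1 → Fin 3) :
    lamOp g c I J = g (I 0) (J 0) * c Fin.elim0 Fin.elim0 := by
  simp only [lamOp, symFst, symSnd, Nat.reduceAdd, sum_perm_fin_one, Equiv.Perm.coe_one,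
    Function.comp_id]
  rw [Subsingleton.elim (I ∘ Fin.castSucc) Fin.elim0,
    Subsingleton.elim (J ∘ Fin.castSucc) Fin.elim0]
  norm_num [Fin.last]

lemma lamOp_one_one_apply (g : Matrix (Fin 3) (Fin 3) ℝ) (w : Tensor 1 1) (I J : Fin 2 → Fin 3) :
    lamOp g w I J = (1/4) * (g (I 1) (J 1) * w (fun _ => I 0) (fun _ => J 0)
      + g (I 0) (J 1) * w (fun _ => I 1) (fun _ => J 0)
      + g (I 1) (J 0) * w (fun _ => I 0) (fun _ => J 1)
      + g (I 0) (J 0) * w (fun _ => I 1) (fun _ => J 1)) := by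
  have h0 (K : Fin 2 → Fin 3) : K ∘ Fin.castSucc = fun _ => K 0 := fin_one_fun_eq_const _
  simp only [lamOp, symFst, symSnd, Nat.reduceAdd, sum_perm_fin_two, Equiv.Perm.coe_one, h0,
    Function.comp_apply, Equiv.swap_apply_left]
  norm_num [Fin.last]
  ring

lemma muOp_sub (ginv : Matrix (Fin 3) (Fin 3) ℝ) {k l : ℕ} (u v : Tensor (k + 1) (l + 1)) :
    muOp ginv (u - v) = muOp ginv u - muOp ginv v := by
  funext I J
  simp only [muOp, Pi.sub_apply, mul_sub, sum_sub_distrib]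

lemma muOp_smul (ginv : Matrix (Fin 3) (Fin 3) ℝ) {k l : ℕ} (c : ℝ)
    (u : Tensor (k + 1) (l + 1)) : muOp ginv (c • u) = c • muOp ginv u := by
  funext I J
  simp only [muOp, Pi.smul_apply, smul_eq_mul, mul_sum]
  exact sum_congr rfl fun a _ => sum_congr rfl fun b _ => by ring

lemma lamOp_smul (g : Matrix (Fin 3) (Fin 3) ℝ) {k l : ℕ} (c : ℝ) (w : Tensor k l) :
    lamOp g (c • w) = c • lamOp g w := by
  funext I J
  simp only [lamOp, symFst, symSnd, Pi.smul_apply, smul_eq_mul, mul_sum]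
  exact sum_congr rfl fun σ _ => sum_congr rfl fun τ _ => by ring

section Trace

variable {g : Matrix (Fin 3) (Fin 3) ℝ}

lemma muOp_lamOp_zero_zero (hg : g.IsSymm) (hdet : IsUnit g.det) (c : Tensor 0 0) :
    muOp g⁻¹ (lamOp g c) = (3 : ℝ) • c := by
  funext I J
  simp only [muOp, lamOp_zero_zero_apply, Pi.smul_apply, smul_eq_mul, ← mul_assoc, ← sum_mul]
  simp [Fin.snoc, sum_sum_inv_mul_self hg hdet, Subsingleton.elim I Fin.elim0,
    Subsingleton.elim J Fin.elim0]

lemma muOp_lamOp_one_one (hg : g.IsSymm) (hdet : IsUnit g.det) (w : Tensor 1 1) :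
    muOp g⁻¹ (lamOp g w) = (5/4 : ℝ) • w + (1/4 : ℝ) • lamOp g (muOp g⁻¹ w) := by
  funext I J
  -- the four terms of `λ w` contract to `3 w`, `w`, `w` and `g ⊗ μ w`
  rw [fin_one_fun_eq_const I, fin_one_fun_eq_const J]
  have snoc_zero (K : Fin 1 → Fin 3) (a : Fin 3) : (Fin.snoc K a : Fin 2 → Fin 3) 0 = K 0 := rfl
  have snoc_one (K : Fin 1 → Fin 3) (a : Fin 3) : (Fin.snoc K a : Fin 2 → Fin 3) 1 = a := rfl
  have snoc_elim0 (a : Fin 3) : (Fin.snoc Fin.elim0 a : Fin 1 → Fin 3) = fun _ => a :=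
    fin_one_fun_eq_const _
  simp only [muOp, lamOp_one_one_apply, lamOp_zero_zero_apply, Pi.add_apply, Pi.smul_apply,
    smul_eq_mul, snoc_zero, snoc_one, snoc_elim0]
  have h1 := sum_sum_inv_mul_self hg hdet
  have h2 := sum_sum_inv_mul_mul_left hg hdet (fun a => w (fun _ => a) (fun _ => J 0)) (I 0)
  have h3 := sum_sum_inv_mul_mul_right hg hdet (fun b => w (fun _ => I 0) (fun _ => b)) (J 0)
  calc _ = 1/4 * ((∑ a, ∑ b, g⁻¹ a b * g a b) * w (fun _ => I 0) (fun _ => J 0)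
          + ∑ a, ∑ b, g⁻¹ a b * g (I 0) b * w (fun _ => a) (fun _ => J 0)
          + ∑ a, ∑ b, g⁻¹ a b * g a (J 0) * w (fun _ => I 0) (fun _ => b)
          + g (I 0) (J 0) * ∑ a, ∑ b, g⁻¹ a b * w (fun _ => a) (fun _ => b)) := by
        simp only [mul_add, mul_sum, sum_mul, ← sum_add_distrib]
        exact sum_congr rfl fun a _ => sum_congr rfl fun b _ => by ring
    _ = _ := by
      rw [h1, h2, h3, Fintype.card_fin]
      ring

end Trace

theorem trace_free_projection_two_two_general (g : Matrix (Fin 3) (Fin 3) ℝ) (hg : g.PosDef)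
    (f : Tensor 2 2) :
    let a₁ : ℝ := 5 / 4
    let a₂ : ℝ := 2
    let b₁ : ℝ := 1 / 4
    let Af : Tensor 1 1 := fun I J =>
      (1 / a₁) * muOp g⁻¹ f I J - (b₁ / (a₁ * a₂)) * lamOp g (muOp g⁻¹ (muOp g⁻¹ f)) I J
    muOp g⁻¹ (fun I J => f I J - lamOp g Af I J) = 0
    ∧ ∃ w : Tensor 1 1,
        (fun I J => f I J - (f I J - lamOp g Af I J)) = lamOp g w := by
  intro a₁ a₂ b₁ Af
  have hsymm : g.IsSymm := Matrix.isHermitian_iff_isSymm.mp hg.isHermitian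
  have hdet : IsUnit g.det := (Matrix.isUnit_iff_isUnit_det g).mp hg.isUnit
  have hAf : Af = (4/5 : ℝ) • muOp g⁻¹ f - (1/10 : ℝ) • lamOp g (muOp g⁻¹ (muOp g⁻¹ f)) := by
    funext I J
    simp only [Af, a₁, a₂, b₁, Pi.sub_apply, Pi.smul_apply, smul_eq_mul]
    norm_num
  have hμAf : muOp g⁻¹ Af = (1/2 : ℝ) • muOp g⁻¹ (muOp g⁻¹ f) := by
    rw [hAf, muOp_sub, muOp_smul, muOp_smul, muOp_lamOp_zero_zero hsymm hdet]
    module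
  refine ⟨?_, Af, funext₂ fun _ _ => sub_sub_cancel _ _⟩
  change muOp g⁻¹ (f - lamOp g Af) = 0
  rw [muOp_sub, muOp_lamOp_one_one hsymm hdet, hμAf, lamOp_smul, hAf]
  module

/-- for `k = ℓ = 2` tensors on a 3-dimensional inner product space, the projection
onto trace-free tensors is `B f = f − λ (A f)`, where
`A f = (1/a₁) μf − (b₁/(a₁a₂)) λ μ² f` with `a₁ = 5/4`, `a₂ = 2`, `b₁ = 1/4`
(`a_K = K(k+ℓ+2−K)/(kℓ)`, `b_K = (k−K)(ℓ−K)/(kℓ)` for `k = ℓ = 2`), `B f` lies in the kernel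
of μ, and `f − B f` lies in the image of λ. -/
theorem trace_free_projection_two_two (g : Matrix (Fin 3) (Fin 3) ℝ) (hg : g.PosDef)
    (f : Tensor 2 2) (hf : IsSym f) :
    let a₁ : ℝ := 5 / 4
    let a₂ : ℝ := 2
    let b₁ : ℝ := 1 / 4
    let Af : Tensor 1 1 := fun I J =>
      (1 / a₁) * muOp g⁻¹ f I J - (b₁ / (a₁ * a₂)) * lamOp g (muOp g⁻¹ (muOp g⁻¹ f)) I J
    muOp g⁻¹ (fun I J => f I J - lamOp g Af I J) = 0
    ∧ ∃ w : Tensor 1 1,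
        (fun I J => f I J - (f I J - lamOp g Af I J)) = lamOp g w :=
  trace_free_projection_two_two_general g hg f
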